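/- Let μ = Σ_{n=0}^∞ (3^{-n} δ_{-2^{-n}} + 2^{-n} δ_{2^{-n}}) be the finite Borel measure on ℝ fully supported on X = {0} ∪ ⋃_{n=0}^∞ {2^{-n}, -2^{-n}}. Then the upper Minkowski dimension of μ satisfies \overline{dim}_M μ ≥ log 3/log 2, while dim_A(μ,x) = 0 for every x ∈ X \ {0} and dim_A(μ,0) ≤ 1. In particular sup_{x∈X} dim_A(μ,x) ≤ 1 < log 3/log 2 ≤ \overline{dim}_M μ. -/

import Mathlib

open MeasureTheory Metric Set
open scoped NNReal ENNReal

/-- The pointwise Assouad dimension of a measure `μ` at a point `x`. -/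
noncomputable def pwAssouadDim {X : Type*} [PseudoMetricSpace X] [MeasurableSpace X]
    (μ : Measure X) (x : X) : ℝ≥0∞ :=
  sInf (ENNReal.ofReal '' {s : ℝ | 0 < s ∧ ∃ C : ℝ, 0 < C ∧ ∀ r R : ℝ, 0 < r → r < R →
    μ (closedBall x R) ≤ ENNReal.ofReal (C * (R / r) ^ s) * μ (closedBall x r)})

/-- The upper Minkowski dimension of a measure `μ` with support `F`:
`inf {s > 0 : ∃ c > 0, μ(B(x,r)) ≥ c r^s for all x ∈ F and 0 < r < 1}`. -/
noncomputable def upperMinkowskiDimOn (μ : Measure ℝ) (F : Set ℝ) : ℝ≥0∞ :=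
  sInf (ENNReal.ofReal '' {s : ℝ | 0 < s ∧ ∃ c : ℝ, 0 < c ∧ ∀ x ∈ F, ∀ r : ℝ, 0 < r → r < 1 →
    ENNReal.ofReal (c * r ^ s) ≤ μ (closedBall x r)})

/-- The measure `μ = Σ_{n=0}^∞ (3^{-n} δ_{-2^{-n}} + 2^{-n} δ_{2^{-n}})` on `ℝ`. -/
noncomputable def nuEx : Measure ℝ :=
  Measure.sum fun n : ℕ =>
    ((3 : ℝ≥0∞)⁻¹ ^ n • Measure.dirac (-((2 : ℝ)⁻¹ ^ n))) +
    ((2 : ℝ≥0∞)⁻¹ ^ n • Measure.dirac ((2 : ℝ)⁻¹ ^ n))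

/-- The support `X = {0} ∪ ⋃_{n=0}^∞ {2^{-n}, -2^{-n}}` of `nuEx`. -/
def XEx : Set ℝ := {0} ∪ ⋃ n : ℕ, {(2 : ℝ)⁻¹ ^ n, -((2 : ℝ)⁻¹ ^ n)}

/-!
Near each atom `-2⁻ⁿ` the measure sees only that atom, of mass `3⁻ⁿ`, inside a ball of radius
`2⁻ⁿ⁻²`; a lower bound `c r^s` on ball masses therefore forces `2^s ≥ 3`. On the other hand every
point of `X \ {0}` is an atom of a finite measure, so its pointwise Assouad dimension vanishes,
and at `0` the masses of balls are comparable to `min r 1`, which gives exponent `1`.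
-/

section PointwiseAssouad

variable {X : Type*} [PseudoMetricSpace X] [MeasurableSpace X] {μ : Measure X} {x : X}

theorem pwAssouadDim_le_ofReal {s C : ℝ} (hs : 0 < s) (hC : 0 < C)
    (h : ∀ r R : ℝ, 0 < r → r < R →
      μ (closedBall x R) ≤ ENNReal.ofReal (C * (R / r) ^ s) * μ (closedBall x r)) :
    pwAssouadDim μ x ≤ ENNReal.ofReal s :=
  sInf_le ⟨s, ⟨hs, C, hC, h⟩, rfl⟩

theorem pwAssouadDim_eq_zero_of_measure_singleton_ne_zero [IsFiniteMeasure μ]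
    (hx : μ {x} ≠ 0) : pwAssouadDim μ x = 0 := by
  set C := (μ univ / μ {x}).toReal
  have hC : 0 < C := ENNReal.toReal_pos
    (ENNReal.div_pos_iff.2 ⟨(measure_pos_of_superset (subset_univ _) hx).ne',
      measure_ne_top μ _⟩).ne'
    (ENNReal.div_ne_top (measure_ne_top μ _) hx)
  have hle : ∀ s : ℝ, 0 < s → pwAssouadDim μ x ≤ ENNReal.ofReal s := fun s hs =>
    pwAssouadDim_le_ofReal hs hC fun r R hr hrR => calc
      μ (closedBall x R) ≤ μ univ := measure_mono (subset_univ _)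
      _ = ENNReal.ofReal C * μ {x} := by
        rw [ENNReal.ofReal_toReal (ENNReal.div_ne_top (measure_ne_top μ _) hx),
          ENNReal.div_mul_cancel hx (measure_ne_top μ _)]
      _ ≤ ENNReal.ofReal (C * (R / r) ^ s) * μ (closedBall x r) := by
        gcongr
        · exact le_mul_of_one_le_right hC.le
            (Real.one_le_rpow ((one_le_div hr).2 hrR.le) hs.le)
        · exact singleton_subset_iff.2 (mem_closedBall_self hr.le)
  refine nonpos_iff_eq_zero.1 (ENNReal.le_of_forall_pos_le_add fun ε hε _ => ?_)
  simpa using hle ε hε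

end PointwiseAssouad

theorem ENNReal.tsum_indicator_pow_le {q a : ℝ≥0∞} {S : Set ℕ} (hS : ∀ n ∈ S, q ^ n ≤ a) :
    ∑' n, S.indicator (q ^ ·) n ≤ a * (1 - q)⁻¹ := by
  rcases S.eq_empty_or_nonempty with rfl | hne
  · simp
  -- Shifting `S` down by its least element `m` injects it into the full geometric series.
  set m := sInf S
  have hm : ∀ n : S, m ≤ n := fun n => Nat.sInf_le n.2
  have hinj : Function.Injective fun n : S => (n : ℕ) - m := fun i j hij => by
    have := hm i; have := hm j; exact Subtype.ext (by simp only at hij; omega)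
  calc ∑' n, S.indicator (q ^ ·) n = ∑' n : S, q ^ m * q ^ ((n : ℕ) - m) := by
        rw [← tsum_subtype]
        exact tsum_congr fun n => by rw [← pow_add, Nat.add_sub_cancel' (hm n)]
    _ = q ^ m * ∑' n : S, q ^ ((n : ℕ) - m) := ENNReal.tsum_mul_left
    _ ≤ a * (1 - q)⁻¹ := by
        gcongr
        · exact hS m (Nat.sInf_mem hne)
        · exact (ENNReal.tsum_comp_le_tsum_of_injective hinj (q ^ ·)).trans_eq
            (ENNReal.tsum_geometric q)

theorem le_one_of_forall_mul_pow_le {a b C : ℝ} (ha : 0 < a) (h : ∀ n : ℕ, a * b ^ n ≤ C) :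
    b ≤ 1 := by
  by_contra! hb
  obtain ⟨n, hn⟩ := pow_unbounded_of_one_lt (C / a) hb
  exact (h n).not_gt ((div_lt_iff₀' ha).1 hn)

theorem abs_two_inv_pow_sub_two_inv_pow {m n : ℕ} (hmn : m ≠ n) :
    (2⁻¹ : ℝ) ^ (n + 1) ≤ |(2⁻¹ : ℝ) ^ m - 2⁻¹ ^ n| := by
  have hpow : ∀ {i j : ℕ}, i ≤ j → (2⁻¹ : ℝ) ^ j ≤ 2⁻¹ ^ i :=
    pow_le_pow_of_le_one (by norm_num) (by norm_num)
  rcases hmn.lt_or_gt with hlt | hgt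
  · have := hpow (Nat.succ_le_of_lt hlt)
    rw [pow_succ] at this ⊢
    rw [abs_of_nonneg (by linarith [hpow hlt.le])]
    linarith [pow_pos (by norm_num : (0 : ℝ) < 2⁻¹) n]
  · have := hpow (Nat.succ_le_of_lt hgt)
    rw [abs_sub_comm, abs_of_nonneg (by linarith [hpow hgt.le])]
    rw [pow_succ] at this ⊢
    linarith

theorem ENNReal.ofReal_inv_ofNat_pow (a : ℕ) [a.AtLeastTwo] (n : ℕ) :
    ENNReal.ofReal ((OfNat.ofNat a : ℝ)⁻¹ ^ n) = (OfNat.ofNat a : ℝ≥0∞)⁻¹ ^ n := by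
  rw [ENNReal.ofReal_pow (inv_pos.2 Nat.ofNat_pos).le, ENNReal.ofReal_inv_of_pos Nat.ofNat_pos,
    ENNReal.ofReal_ofNat]

theorem neg_two_inv_pow_mem_XEx (n : ℕ) : -((2 : ℝ)⁻¹ ^ n) ∈ XEx :=
  Or.inr (mem_iUnion.2 ⟨n, Or.inr rfl⟩)

theorem nuEx_apply {s : Set ℝ} (hs : MeasurableSet s) :
    nuEx s = ∑' n : ℕ, ((3 : ℝ≥0∞)⁻¹ ^ n * s.indicator 1 (-((2 : ℝ)⁻¹ ^ n)) +
      (2 : ℝ≥0∞)⁻¹ ^ n * s.indicator 1 ((2 : ℝ)⁻¹ ^ n)) := by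
  simp only [nuEx, Measure.sum_apply _ hs, Measure.add_apply, Measure.smul_apply,
    Measure.dirac_apply' _ hs, smul_eq_mul]

theorem inv_three_pow_le_nuEx {s : Set ℝ} {n : ℕ} (h : -((2 : ℝ)⁻¹ ^ n) ∈ s) :
    (3 : ℝ≥0∞)⁻¹ ^ n ≤ nuEx s := by
  calc (3 : ℝ≥0∞)⁻¹ ^ n = ((3 : ℝ≥0∞)⁻¹ ^ n • Measure.dirac (-((2 : ℝ)⁻¹ ^ n))) s := by
        rw [Measure.smul_apply, Measure.dirac_apply_of_mem h, smul_eq_mul, mul_one]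
    _ ≤ nuEx s := (Measure.le_add_right le_rfl).trans (Measure.le_sum _ n) s

theorem inv_two_pow_le_nuEx {s : Set ℝ} {n : ℕ} (h : (2 : ℝ)⁻¹ ^ n ∈ s) :
    (2 : ℝ≥0∞)⁻¹ ^ n ≤ nuEx s := by
  calc (2 : ℝ≥0∞)⁻¹ ^ n = ((2 : ℝ≥0∞)⁻¹ ^ n • Measure.dirac ((2 : ℝ)⁻¹ ^ n)) s := by
        rw [Measure.smul_apply, Measure.dirac_apply_of_mem h, smul_eq_mul, mul_one]
    _ ≤ nuEx s := (Measure.le_add_left le_rfl).trans (Measure.le_sum _ n) s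

theorem nuEx_le_two_mul_tsum_indicator {s : Set ℝ} (hs : MeasurableSet s) :
    nuEx s ≤ 2 * ∑' n, {n : ℕ | -((2 : ℝ)⁻¹ ^ n) ∈ s ∨ (2 : ℝ)⁻¹ ^ n ∈ s}.indicator
      ((2 : ℝ≥0∞)⁻¹ ^ ·) n := by
  rw [nuEx_apply hs, ← ENNReal.tsum_mul_left]
  refine ENNReal.tsum_le_tsum fun n => ?_
  have hind : ∀ y : ℝ, s.indicator (1 : ℝ → ℝ≥0∞) y ≤ 1 := fun y =>
    indicator_apply_le' (fun _ => le_rfl) fun _ => zero_le_one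
  by_cases hn : -((2 : ℝ)⁻¹ ^ n) ∈ s ∨ (2 : ℝ)⁻¹ ^ n ∈ s
  · rw [indicator_of_mem (s := {n : ℕ | -((2 : ℝ)⁻¹ ^ n) ∈ s ∨ (2 : ℝ)⁻¹ ^ n ∈ s}) hn, two_mul]
    gcongr
    · exact (mul_le_of_le_one_right' (hind _)).trans (by gcongr; norm_num)
    · exact mul_le_of_le_one_right' (hind _)
  · rw [not_or] at hn
    rw [indicator_of_notMem hn.1, indicator_of_notMem hn.2, mul_zero, mul_zero, add_zero]
    exact zero_le

instance : IsFiniteMeasure nuEx where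
  measure_univ_lt_top := by
    refine (nuEx_le_two_mul_tsum_indicator MeasurableSet.univ).trans_lt ?_
    grw [ENNReal.tsum_indicator_pow_le (a := 1) fun n _ => pow_le_one₀ (by simp) (by simp)]
    simp [ENNReal.one_sub_inv_two, ENNReal.mul_lt_top]

theorem nuEx_singleton_ne_zero {x : ℝ} (hx : x ∈ XEx \ {0}) : nuEx {x} ≠ 0 := by
  obtain ⟨h0 | hx, hx0⟩ := hx
  · exact absurd h0 hx0
  obtain ⟨n, rfl | rfl⟩ := mem_iUnion.1 hx
  · exact ((ENNReal.pow_pos (by simp) n).trans_le (inv_two_pow_le_nuEx (mem_singleton _))).ne'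
  · exact ((ENNReal.pow_pos (by simp) n).trans_le (inv_three_pow_le_nuEx (mem_singleton _))).ne'

theorem nuEx_closedBall_zero_le (R : ℝ) :
    nuEx (closedBall 0 R) ≤ ENNReal.ofReal (4 * min R 1) := by
  have hS : ∀ n ∈ {n : ℕ | -((2 : ℝ)⁻¹ ^ n) ∈ closedBall 0 R ∨ (2 : ℝ)⁻¹ ^ n ∈ closedBall 0 R},
      (2 : ℝ≥0∞)⁻¹ ^ n ≤ ENNReal.ofReal (min R 1) := by
    intro n hn
    rw [← ENNReal.ofReal_inv_ofNat_pow]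
    refine ENNReal.ofReal_le_ofReal (le_min ?_ (pow_le_one₀ (by norm_num) (by norm_num)))
    rcases hn with h | h <;> simpa [abs_of_pos] using h
  calc nuEx (closedBall 0 R) ≤ 2 * (ENNReal.ofReal (min R 1) * (1 - 2⁻¹)⁻¹) := by
        grw [nuEx_le_two_mul_tsum_indicator measurableSet_closedBall,
          ENNReal.tsum_indicator_pow_le hS]
    _ = ENNReal.ofReal (4 * min R 1) := by
        rw [ENNReal.one_sub_inv_two, inv_inv, ENNReal.ofReal_mul (by norm_num),
          ENNReal.ofReal_ofNat]
        ring

theorem ofReal_min_div_two_le_nuEx_closedBall_zero {r : ℝ} (hr : 0 < r) :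
    ENNReal.ofReal (min r 1 / 2) ≤ nuEx (closedBall 0 r) := by
  obtain ⟨n, hlo, hhi⟩ : ∃ n : ℕ, min r 1 / 2 ≤ (2 : ℝ)⁻¹ ^ n ∧ (2 : ℝ)⁻¹ ^ n ≤ r := by
    rcases le_or_gt 1 r with h1 | h1
    · exact ⟨0, by norm_num [h1], by simpa using h1⟩
    · obtain ⟨n, hlt, hle⟩ :=
        exists_nat_pow_near_of_lt_one hr h1.le (by norm_num) (by norm_num : (2 : ℝ)⁻¹ < 1)
      refine ⟨n + 1, ?_, hlt.le⟩
      rw [min_eq_left h1.le, pow_succ]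
      linarith
  calc ENNReal.ofReal (min r 1 / 2) ≤ ENNReal.ofReal ((2 : ℝ)⁻¹ ^ n) :=
        ENNReal.ofReal_le_ofReal hlo
    _ = (2 : ℝ≥0∞)⁻¹ ^ n := ENNReal.ofReal_inv_ofNat_pow 2 n
    _ ≤ nuEx (closedBall 0 r) := inv_two_pow_le_nuEx (by simpa [abs_of_pos] using hhi)

theorem nuEx_closedBall_neg_two_inv_pow_le (n : ℕ) :
    nuEx (closedBall (-((2 : ℝ)⁻¹ ^ n)) ((2 : ℝ)⁻¹ ^ (n + 2))) ≤ (3 : ℝ≥0∞)⁻¹ ^ n := by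
  have hpos : ∀ k : ℕ, (0 : ℝ) < 2⁻¹ ^ k := fun k => pow_pos (by norm_num) k
  rw [nuEx_apply measurableSet_closedBall]
  refine (ENNReal.tsum_le_tsum fun m => ?_).trans_eq (tsum_ite_eq n fun _ => (3 : ℝ≥0∞)⁻¹ ^ n)
  have hplus : (2 : ℝ)⁻¹ ^ m ∉ closedBall (-((2 : ℝ)⁻¹ ^ n)) (2⁻¹ ^ (n + 2)) := by
    rw [mem_closedBall, Real.dist_eq, sub_neg_eq_add, abs_of_pos (by linarith [hpos m, hpos n]),
      not_le, pow_add]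
    nlinarith [hpos m, hpos n]
  rw [indicator_of_notMem hplus, mul_zero, add_zero]
  by_cases hmn : m = n
  · rw [if_pos hmn, hmn]
    exact mul_le_of_le_one_right' (indicator_apply_le' (fun _ => le_rfl) fun _ => zero_le_one)
  · have hminus : -((2 : ℝ)⁻¹ ^ m) ∉ closedBall (-((2 : ℝ)⁻¹ ^ n)) (2⁻¹ ^ (n + 2)) := by
      rw [mem_closedBall, Real.dist_eq, neg_sub_neg, abs_sub_comm, not_le]
      refine lt_of_lt_of_le ?_ (abs_two_inv_pow_sub_two_inv_pow hmn)
      exact pow_lt_pow_right_of_lt_one₀ (by norm_num) (by norm_num) (by omega)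
    rw [if_neg hmn, indicator_of_notMem hminus, mul_zero]

theorem log_three_div_log_two_le_upperMinkowskiDimOn_nuEx :
    ENNReal.ofReal (Real.log 3 / Real.log 2) ≤ upperMinkowskiDimOn nuEx XEx := by
  refine le_sInf ?_
  rintro _ ⟨s, ⟨-, c, hc, hball⟩, rfl⟩
  refine ENNReal.ofReal_le_ofReal ?_
  set u : ℝ := (2 : ℝ)⁻¹ ^ s
  have hu : 0 < u := by positivity
  have hgeom : ∀ n : ℕ, c * u ^ 2 * (3 * u) ^ n ≤ 1 := by
    intro n
    have hr : (0 : ℝ) < 2⁻¹ ^ (n + 2) := by positivity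
    have h := (hball _ (neg_two_inv_pow_mem_XEx n) _ hr
      (pow_lt_one₀ (by norm_num) (by norm_num) (by omega))).trans
      (nuEx_closedBall_neg_two_inv_pow_le n)
    rw [← ENNReal.ofReal_inv_ofNat_pow, ENNReal.ofReal_le_ofReal_iff (by positivity),
      ← Real.rpow_pow_comm (by norm_num)] at h
    calc c * u ^ 2 * (3 * u) ^ n = (c * u ^ (n + 2)) * 3 ^ n := by ring
      _ ≤ (3 : ℝ)⁻¹ ^ n * 3 ^ n := by gcongr
      _ = 1 := by rw [← mul_pow, inv_mul_cancel₀ (by norm_num), one_pow]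
  have h3u : 3 * u ≤ 1 := le_one_of_forall_mul_pow_le (by positivity) hgeom
  have h3 : (3 : ℝ) ≤ 2 ^ s := by
    rwa [show u = (2 ^ s)⁻¹ from Real.inv_rpow (by norm_num) s, ← div_eq_mul_inv,
      div_le_one (by positivity)] at h3u
  rw [div_le_iff₀ (Real.log_pos (by norm_num)), ← Real.log_rpow (by norm_num)]
  exact Real.log_le_log (by norm_num) h3

theorem pwAssouadDim_nuEx_zero_le_one : pwAssouadDim nuEx 0 ≤ 1 := by
  rw [← ENNReal.ofReal_one]
  refine pwAssouadDim_le_ofReal one_pos (by norm_num : (0 : ℝ) < 8) fun r R hr hrR => ?_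
  have hmin : r * min R 1 ≤ R * min r 1 := by
    rw [mul_min_of_nonneg _ _ hr.le, mul_min_of_nonneg _ _ (hr.trans hrR).le, mul_comm, mul_one,
      mul_one]
    exact min_le_min le_rfl hrR.le
  calc nuEx (closedBall 0 R) ≤ ENNReal.ofReal (4 * min R 1) := nuEx_closedBall_zero_le R
    _ ≤ ENNReal.ofReal (8 * (R / r) ^ (1 : ℝ) * (min r 1 / 2)) := by
        refine ENNReal.ofReal_le_ofReal ?_
        rw [Real.rpow_one, show 8 * (R / r) * (min r 1 / 2) = 4 * (R * min r 1) / r by ring,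
          le_div_iff₀ hr]
        linarith
    _ ≤ ENNReal.ofReal (8 * (R / r) ^ (1 : ℝ)) * nuEx (closedBall 0 r) := by
        rw [ENNReal.ofReal_mul (by have := hr.trans hrR; positivity)]
        gcongr
        exact ofReal_min_div_two_le_nuEx_closedBall_zero hr

/-- The upper Minkowski dimension of `nuEx` is at least `log 3 / log 2`,
while `dim_A(μ,x) = 0` for every `x ∈ X \ {0}` and `dim_A(μ,0) ≤ 1`; in particular
`sup_{x ∈ X} dim_A(μ,x) ≤ 1 < log 3 / log 2 ≤ upper Minkowski dimension of μ`. -/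
theorem nuEx_minkowski_gt_sup_pwAssouad :
    ENNReal.ofReal (Real.log 3 / Real.log 2) ≤ upperMinkowskiDimOn nuEx XEx ∧
    (∀ x ∈ XEx \ {0}, pwAssouadDim nuEx x = 0) ∧
    pwAssouadDim nuEx 0 ≤ 1 ∧
    (⨆ x ∈ XEx, pwAssouadDim nuEx x) ≤ 1 ∧
    (1 : ℝ≥0∞) < ENNReal.ofReal (Real.log 3 / Real.log 2) := by
  have hatoms : ∀ x ∈ XEx \ {0}, pwAssouadDim nuEx x = 0 := fun x hx =>
    pwAssouadDim_eq_zero_of_measure_singleton_ne_zero (nuEx_singleton_ne_zero hx)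
  refine ⟨log_three_div_log_two_le_upperMinkowskiDimOn_nuEx, hatoms,
    pwAssouadDim_nuEx_zero_le_one, iSup₂_le fun x hx => ?_, ?_⟩
  · rcases eq_or_ne x 0 with rfl | hx0
    · exact pwAssouadDim_nuEx_zero_le_one
    · exact (hatoms x ⟨hx, hx0⟩).trans_le zero_le_one
  · rw [ENNReal.one_lt_ofReal, one_lt_div (Real.log_pos (by norm_num))]
    exact Real.log_lt_log (by norm_num) (by norm_num)
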